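/- arXiv:2506.13650 — 3 statements merged into one kernel-verified Lean document; each statement's English description precedes it below -/
import Mathlib

section
/- For every time step t, the new progress satisfies 0 ≤ c t − c (t+1) ≤ w t; consequently the Defender's equilibrium allocation probability σ*(g¹) = (c t − c (t+1)) / w t is a well-defined probability, i.e. it lies in the interval [0,1]. -/
/-- The new progress `c t - c (t+1)` lies in `[0, w t]`, hence the
Defender's allocation probability `(c t - c (t+1)) / w t` lies in `[0, 1]`. -/
theorem progress_step_in_unit_interval
    (a w c : ℕ → ℝ)
    (ha : ∀ t, 0 ≤ a t)
    (hw : ∀ t, 0 < w t)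
    (htri : ∀ t, a t ≤ w t + a (t + 1))
    (hc : ∀ t, c t = (Finset.range (t + 1)).inf' Finset.nonempty_range_add_one a) :
    ∀ t, (0 ≤ c t - c (t + 1) ∧ c t - c (t + 1) ≤ w t) ∧
      (c t - c (t + 1)) / w t ∈ Set.Icc (0 : ℝ) 1 := by
  intro t
  -- c (t+1) ≤ c t
  have h1 : c (t + 1) ≤ c t := by
    obtain ⟨τ, hτ, hτeq⟩ :=
      Finset.exists_mem_eq_inf' (Finset.nonempty_range_add_one (n := t)) a
    rw [hc t, hτeq, hc (t + 1)]
    exact Finset.inf'_le a (by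
      simp only [Finset.mem_range] at hτ ⊢; omega)
  -- c t ≤ w t + c (t+1)
  have h2 : c t ≤ w t + c (t + 1) := by
    obtain ⟨τ, hτ, hτeq⟩ :=
      Finset.exists_mem_eq_inf' (Finset.nonempty_range_add_one (n := t + 1)) a
    simp only [Finset.mem_range] at hτ
    have hct : c (t + 1) = a τ := by rw [hc (t + 1)]; exact hτeq
    rcases Nat.lt_or_ge τ (t + 1) with hlt | hge
    · have : c t ≤ a τ := by
        rw [hc t]; exact Finset.inf'_le a (Finset.mem_range.mpr hlt)
      have := this.trans (le_add_of_nonneg_left (le_of_lt (hw t)))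
      linarith [hct]
    · have hτ' : τ = t + 1 := by omega
      have hct' : c t ≤ a t := by
        rw [hc t]; exact Finset.inf'_le a (Finset.mem_range.mpr (by omega))
      have := htri t
      rw [hct, hτ']
      linarith
  have h0 : 0 ≤ c t - c (t + 1) := by linarith
  have hle : c t - c (t + 1) ≤ w t := by linarith
  refine ⟨⟨h0, hle⟩, ⟨div_nonneg h0 (hw t).le, ?_⟩⟩
  rw [div_le_one (hw t)]
  exact hle
end

section
/- For every time step t, the new progress is maximal, c t − c (t+1) = w t, if and only if both of the following hold: (i) a t ≤ a τ for all τ ≤ t (the node at time t is a closest node to g¹ among all nodes visited up to time t), and (ii) a t = w t + a (t+1) (the move along edge t lies on a shortest path toward g¹). -/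
/-- The new progress is maximal, `c t - c (t+1) = w t`, iff
(i) `s_t` is a closest visited node to `g¹`, and (ii) the move at time `t`
lies on a shortest path toward `g¹`. -/
theorem progress_maximal_iff
    (a w c : ℕ → ℝ)
    (ha : ∀ t, 0 ≤ a t)
    (hw : ∀ t, 0 < w t)
    (htri : ∀ t, a t ≤ w t + a (t + 1))
    (hc : ∀ t, c t = (Finset.range (t + 1)).inf' Finset.nonempty_range_add_one a) :
    ∀ t, c t - c (t + 1) = w t ↔ (∀ τ ≤ t, a t ≤ a τ) ∧ a t = w t + a (t + 1) := by
  intro t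
  have hle : ∀ τ ≤ t, c t ≤ a τ := by
    intro τ hτ
    rw [hc]
    exact Finset.inf'_le a (Finset.mem_range.mpr (Nat.lt_succ_of_le hτ))
  have hle1 : ∀ τ ≤ t + 1, c (t + 1) ≤ a τ := by
    intro τ hτ
    rw [hc]
    exact Finset.inf'_le a (Finset.mem_range.mpr (Nat.lt_succ_of_le hτ))
  have hsucc : c (t + 1) = min (a (t + 1)) (c t) := by
    apply le_antisymm
    · refine le_min (hle1 _ le_rfl) ?_
      rw [hc (t + 1), hc t]
      exact Finset.inf'_mono a (Finset.range_subset_range.mpr (by omega)) _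
    · rw [hc (t + 1)]
      refine Finset.le_inf' _ _ fun τ hτ => ?_
      rcases Nat.lt_succ_iff_lt_or_eq.mp (Finset.mem_range.mp hτ) with h | h
      · exact le_trans (min_le_right _ _) (hle τ (Nat.lt_succ_iff.mp h))
      · exact h ▸ min_le_left _ _
  constructor
  · intro h
    -- c (t+1) < c t since w t > 0
    have hlt : c (t + 1) < c t := by linarith [hw t]
    have hc1 : c (t + 1) = a (t + 1) := by
      rcases min_cases (a (t + 1)) (c t) with ⟨h1, _⟩ | ⟨h1, h2⟩
      · rw [hsucc, h1]
      · exfalso; rw [hsucc, h1] at hlt; exact lt_irrefl _ hlt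
    have hct : c t = w t + a (t + 1) := by rw [← hc1]; linarith
    have hat : a t = c t := le_antisymm (by rw [hct]; exact htri t) (hle t le_rfl)
    refine ⟨fun τ hτ => hat ▸ hle τ hτ, by rw [hat, hct]⟩
  · rintro ⟨h1, h2⟩
    have hct : c t = a t := by
      refine le_antisymm (hle t le_rfl) ?_
      rw [hc]
      refine Finset.le_inf' _ _ fun τ hτ => h1 τ (Nat.lt_succ_iff.mp (Finset.mem_range.mp hτ))
    have : a (t + 1) < a t := by linarith [hw t]
    rw [hsucc, hct, min_eq_left this.le]
    linarith
end

section
/- (Lemma 2, loop removal, trajectory form) Suppose the walk additionally satisfies the two-sided Lipschitz bound |a (t+1) − a t| ≤ w t for all t (valid for shortest-path distance in an undirected weighted graph), and suppose there exist indices τ₁ < τ₂ ≤ T with a τ₁ = a τ₂ (the walk returns to a previously visited node). Define the excised walk by a' t = a t for t ≤ τ₁ and a' t = a (t + (τ₂ − τ₁)) for t > τ₁, with weights w' t = w t for t < τ₁ and w' t = w (t + (τ₂ − τ₁)) for t ≥ τ₁, terminal time T' = T − (τ₂ − τ₁), and progress function c' t = min_{τ ≤ t} a' τ. Then the secondary-type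 Attacker's expected cost does not increase upon excising the loop: Σ_{t=0}^{T'−1} (w' t − (c' t − c' (t+1))) ≤ Σ_{t=0}^{T−1} (w t − (c t − c (t+1))). Hence the secondary Attacker has no incentive to visit any node more than once. -/
private lemma chain_bound (a w : ℕ → ℝ) (hlip : ∀ t, |a (t + 1) - a t| ≤ w t)
    {s n : ℕ} (h : s ≤ n) : a n - a s ≤ ∑ u ∈ Finset.Ico s n, w u := by
  induction n, h using Nat.le_induction with
  | base => simp
  | succ n hn ih =>
    rw [Finset.sum_Ico_succ_top hn]
    have h2 := abs_le.mp (hlip n)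
    linarith [h2.2]

/-- Lemma 2, loop removal, trajectory form: excising a loop from
the walk (returning to a previously visited node) does not increase the
secondary-type Attacker's expected cost under the Defender's equilibrium
strategy. Hence the secondary Attacker has no incentive to revisit a node. -/
theorem secondary_loop_removal
    (a w c a' w' c' : ℕ → ℝ)
    (ha : ∀ t, 0 ≤ a t)
    (hw : ∀ t, 0 < w t)
    (hlip : ∀ t, |a (t + 1) - a t| ≤ w t)
    (hc : ∀ t, c t = (Finset.range (t + 1)).inf' Finset.nonempty_range_add_one a)
    (τ₁ τ₂ T : ℕ) (hτ : τ₁ < τ₂) (hτT : τ₂ ≤ T) (hloop : a τ₁ = a τ₂)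
    (ha' : ∀ t, a' t = if t ≤ τ₁ then a t else a (t + (τ₂ - τ₁)))
    (hw' : ∀ t, w' t = if t < τ₁ then w t else w (t + (τ₂ - τ₁)))
    (hc' : ∀ t, c' t = (Finset.range (t + 1)).inf' Finset.nonempty_range_add_one a')
    (T' : ℕ) (hT' : T' = T - (τ₂ - τ₁)) :
    ∑ t ∈ Finset.range T', (w' t - (c' t - c' (t + 1))) ≤
      ∑ t ∈ Finset.range T, (w t - (c t - c (t + 1))) := by
  set d := τ₂ - τ₁ with hd_def
  have hdτ : τ₁ + d = τ₂ := by omega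
  have hdT : d ≤ T := by omega
  have hTsum : T' + d = T := by omega
  have hτ₁T' : τ₁ ≤ T' := by omega
  -- telescoping
  have key1 : ∀ (cc ww : ℕ → ℝ) (n : ℕ),
      ∑ t ∈ Finset.range n, (ww t - (cc t - cc (t + 1)))
        = (∑ t ∈ Finset.range n, ww t) + (cc n - cc 0) := by
    intro cc ww n
    rw [← Finset.sum_range_sub cc n, ← Finset.sum_add_distrib]
    exact Finset.sum_congr rfl (fun t _ => by ring)
  rw [key1 c w T, key1 c' w' T']
  -- weight sum equality
  have hshift : ∑ t ∈ Finset.Ico τ₁ T', w (t + d) = ∑ t ∈ Finset.Ico τ₂ T, w t := by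
    rw [← hdτ, ← hTsum]
    simpa [add_comm] using Finset.sum_Ico_add w τ₁ T' d
  have hwsum : ∑ t ∈ Finset.range T', w' t
      = (∑ t ∈ Finset.range T, w t) - ∑ t ∈ Finset.Ico τ₁ τ₂, w t := by
    have h1 : ∑ t ∈ Finset.range T', w' t
        = (∑ t ∈ Finset.Ico 0 τ₁, w t) + ∑ t ∈ Finset.Ico τ₁ T', w (t + d) := by
      rw [Finset.range_eq_Ico, ← Finset.sum_Ico_consecutive _ (Nat.zero_le τ₁) hτ₁T']
      congr 1
      · exact Finset.sum_congr rfl (fun t ht => by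
          rw [hw' t, if_pos (Finset.mem_Ico.mp ht).2])
      · exact Finset.sum_congr rfl (fun t ht => by
          rw [hw' t, if_neg (by exact Nat.not_lt.mpr (Finset.mem_Ico.mp ht).1)])
    have h2 : ∑ t ∈ Finset.range T, w t
        = ((∑ t ∈ Finset.Ico 0 τ₁, w t) + ∑ t ∈ Finset.Ico τ₁ τ₂, w t)
          + ∑ t ∈ Finset.Ico τ₂ T, w t := by
      rw [Finset.sum_Ico_consecutive _ (Nat.zero_le τ₁) hτ.le,
        Finset.sum_Ico_consecutive _ (by omega : (0:ℕ) ≤ τ₂) hτT,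
        Finset.range_eq_Ico]
    rw [h1, hshift, h2]; ring
  -- c values at 0
  have hc0 : c 0 = a 0 := by rw [hc]; simp
  have hc'0 : c' 0 = a 0 := by
    rw [hc']; simp [ha' 0, Nat.zero_le]
  -- loop weight nonneg
  have hloopw : 0 ≤ ∑ t ∈ Finset.Ico τ₁ τ₂, w t :=
    Finset.sum_nonneg (fun t _ => (hw t).le)
  -- key inequality: c' T' ≤ c T + loop weight
  obtain ⟨s, hs_mem, hs⟩ := Finset.exists_mem_eq_inf'
    (Finset.nonempty_range_add_one (n := T)) a
  have hsT : s ≤ T := Nat.lt_succ_iff.mp (Finset.mem_range.mp hs_mem)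
  have hcT : c T = a s := by rw [hc]; exact hs
  have hkey : c' T' ≤ c T + ∑ t ∈ Finset.Ico τ₁ τ₂, w t := by
    rw [hcT]
    have hle : ∀ u : ℕ, u ≤ T' → c' T' ≤ a' u := by
      intro u hu
      rw [hc']
      exact Finset.inf'_le a' (Finset.mem_range.mpr (Nat.lt_succ_of_le hu))
    rcases le_or_gt s τ₁ with h1 | h1
    · have : c' T' ≤ a' s := hle s (le_trans h1 hτ₁T')
      rw [ha' s, if_pos h1] at this
      linarith
    · rcases lt_or_ge s τ₂ with h2 | h2
      · -- τ₁ < s < τ₂ : use Lipschitz chain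
        have hch : a τ₂ - a s ≤ ∑ u ∈ Finset.Ico s τ₂, w u :=
          chain_bound a w hlip h2.le
        have hsub : ∑ u ∈ Finset.Ico s τ₂, w u ≤ ∑ u ∈ Finset.Ico τ₁ τ₂, w u :=
          Finset.sum_le_sum_of_subset_of_nonneg
            (Finset.Ico_subset_Ico h1.le le_rfl) (fun t _ _ => (hw t).le)
        have : c' T' ≤ a' τ₁ := hle τ₁ hτ₁T'
        rw [ha' τ₁, if_pos le_rfl] at this
        rw [hloop] at this
        linarith
      · -- τ₂ ≤ s : use shifted index
        have hsd : s - d ≤ T' := by omega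
        have : c' T' ≤ a' (s - d) := hle _ hsd
        have heq : a' (s - d) = a s := by
          rw [ha']
          rcases le_or_gt (s - d) τ₁ with h3 | h3
          · have hsτ₂ : s = τ₂ := by omega
            rw [if_pos h3]
            have : s - d = τ₁ := by omega
            rw [this, hloop, hsτ₂]
          · rw [if_neg (by omega)]
            congr 1; omega
        rw [heq] at this
        linarith
  rw [hwsum, hc0, hc'0]
  linarith
end
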